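/- arXiv:2411.09808 — 8 statements merged into one kernel-verified Lean document; each statement's English description precedes it below -/
import Mathlib

section
/- Let J ≥ 1 be an integer, let μ be a probability measure on Fin J → ℝ that is absolutely continuous with respect to the Lebesgue (volume) measure, and let β : Fin J → ℝ satisfy β j ≥ 0 for all j. Then for μ-almost every ε : Fin J → ℝ the following hold: (i) there exists j* ∈ Fin J with ε m < ε j* for all m ≠ j*; (ii) for every z ∈ Fin J there exists a unique k ∈ Fin J such that β m · 1{m = z} + ε m < β k · 1{k = z} + ε k for all m ≠ k; (iii) every such k satisfies k = z or k = j*; and (iv) if in addition β 0 = 0, then the unique strict maximizer of the perturbed utilities under instrument z = 0 equals j*. -/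
open MeasureTheory

lemma hyp_null (J : ℕ) (i j : Fin J) (hij : i ≠ j) (c : ℝ) :
    volume {x : Fin J → ℝ | x i = x j + c} = 0 := by
  set L : (Fin J → ℝ) →ₗ[ℝ] ℝ := (LinearMap.proj i : (Fin J → ℝ) →ₗ[ℝ] ℝ) - LinearMap.proj j with hLdef
  have hL : L ≠ 0 := by
    intro h
    have h1 : L (Pi.single i 1) = 0 := by rw [h]; rfl
    simp [hLdef, Pi.single_apply, hij.symm] at h1
  set x0 : Fin J → ℝ := (Pi.single j c : Fin J → ℝ) with hx0
  have hset : {x : Fin J → ℝ | x i = x j + c}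
      = (fun x => x + x0) ⁻¹' (LinearMap.ker L : Set (Fin J → ℝ)) := by
    ext x
    simp only [Set.mem_setOf_eq, Set.mem_preimage, SetLike.mem_coe, LinearMap.mem_ker,
      hLdef, LinearMap.sub_apply, LinearMap.proj_apply, hx0, Pi.add_apply,
      Pi.single_apply, if_pos rfl, if_neg hij, if_neg hij.symm, if_true]
    constructor <;> intro h <;> linarith
  rw [hset, measure_preimage_add_right]
  exact Measure.addHaar_submodule _ _ (by rwa [Ne, LinearMap.ker_eq_top])

/-- Lemma 1 of the paper (the "default choice" lemma). -/
theorem stmt_1 (J : ℕ) (hJ : 1 ≤ J)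
    (μ : Measure (Fin J → ℝ)) [IsProbabilityMeasure μ] (hac : μ ≪ volume)
    (β : Fin J → ℝ) (hβ : ∀ j, 0 ≤ β j) :
    ∀ᵐ ε ∂μ, ∃ jstar : Fin J,
      (∀ m ≠ jstar, ε m < ε jstar) ∧
      (∀ z : Fin J, ∃! k : Fin J, ∀ m ≠ k,
        β m * (if m = z then (1 : ℝ) else 0) + ε m
          < β k * (if k = z then (1 : ℝ) else 0) + ε k) ∧
      (∀ z k : Fin J,
        (∀ m ≠ k, β m * (if m = z then (1 : ℝ) else 0) + ε m
          < β k * (if k = z then (1 : ℝ) else 0) + ε k) → k = z ∨ k = jstar) ∧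
      (β ⟨0, hJ⟩ = 0 → ∀ k : Fin J,
        (∀ m ≠ k, β m * (if m = (⟨0, hJ⟩ : Fin J) then (1 : ℝ) else 0) + ε m
          < β k * (if k = (⟨0, hJ⟩ : Fin J) then (1 : ℝ) else 0) + ε k) → k = jstar) := by
  have : Nonempty (Fin J) := ⟨⟨0, hJ⟩⟩
  -- a.e. no ties
  have hae : ∀ᵐ ε ∂μ, ∀ i j : Fin J, i ≠ j → ε i ≠ ε j + β j ∧ ε i ≠ ε j := by
    rw [ae_all_iff]
    intro i
    rw [ae_all_iff]
    intro j
    by_cases hij : i = j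
    · filter_upwards with ε h; exact absurd hij h
    · have hb : μ {ε : Fin J → ℝ | ε i = ε j + β j} = 0 :=
        hac (hyp_null J i j hij (β j))
      have h0 : μ {ε : Fin J → ℝ | ε i = ε j + 0} = 0 :=
        hac (hyp_null J i j hij 0)
      filter_upwards [measure_eq_zero_iff_ae_notMem.1 hb, measure_eq_zero_iff_ae_notMem.1 h0]
        with ε hε1 hε2 _
      refine ⟨hε1, ?_⟩
      intro h
      exact hε2 (by simpa using h)
  filter_upwards [hae] with ε hties
  set u : Fin J → Fin J → ℝ := fun z m => β m * (if m = z then (1:ℝ) else 0) + ε m with hu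
  -- distinctness of perturbed utilities
  have hne : ∀ z m k : Fin J, m ≠ k → u z m ≠ u z k := by
    intro z m k hmk h
    by_cases hm : m = z
    · subst hm
      have hk : k ≠ m := hmk.symm
      simp only [hu, if_true, if_pos rfl, if_neg hk, mul_one, mul_zero, zero_add] at h
      exact (hties k m hk).1 (by linarith)
    · by_cases hk : k = z
      · subst hk
        simp only [hu, if_true, if_pos rfl, if_neg hm, mul_one, mul_zero, zero_add] at h
        exact (hties m k hm).1 (by linarith)
      · simp only [hu, if_neg hm, if_neg hk, mul_zero, zero_add] at h
        exact (hties m k hmk).2 h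
  obtain ⟨jstar, hjmax⟩ := Finite.exists_max ε
  have hjstar : ∀ m ≠ jstar, ε m < ε jstar := fun m hm =>
    lt_of_le_of_ne (hjmax m) ((hties m jstar hm).2)
  have hmaxuniq : ∀ k : Fin J, (∀ m ≠ k, ε m < ε k) → k = jstar := by
    intro k hk
    by_contra h
    exact lt_irrefl _ (lt_trans (hk jstar (fun e => h e.symm)) (hjstar k h))
  refine ⟨jstar, hjstar, ?_, ?_, ?_⟩
  · -- (ii) existence and uniqueness of strict maximizer for each z
    intro z
    obtain ⟨k, hkmax⟩ := Finite.exists_max (u z)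
    refine ⟨k, fun m hm => lt_of_le_of_ne (hkmax m) (hne z m k hm), ?_⟩
    intro k' hk'
    by_contra h
    exact lt_irrefl _ (lt_trans (hk' k (Ne.symm h)) ((fun m hm => lt_of_le_of_ne (hkmax m) (hne z m k hm)) k' h))
  · -- (iii)
    intro z k hk
    by_cases hkz : k = z
    · exact Or.inl hkz
    · refine Or.inr (hmaxuniq k ?_)
      intro m hm
      have h1 : u z m < u z k := hk m hm
      have h2 : ε m ≤ u z m := by
        have : (0:ℝ) ≤ β m * (if m = z then (1:ℝ) else 0) := by
          by_cases h : m = z <;> simp [h] <;> exact hβ _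
        simp only [hu]; linarith
      have h3 : u z k = ε k := by simp [hu, if_neg hkz]
      linarith
  · -- (iv)
    intro hβ0 k hk
    refine hmaxuniq k ?_
    intro m hm
    have h1 : u _ m < u _ k := hk m hm
    have h2 : ε m ≤ u (⟨0, hJ⟩ : Fin J) m := by
      have : (0:ℝ) ≤ β m * (if m = (⟨0, hJ⟩ : Fin J) then (1:ℝ) else 0) := by
        by_cases h : m = (⟨0, hJ⟩ : Fin J) <;> simp [h] <;> exact hβ _
      simp only [hu]; linarith
    have h3 : u (⟨0, hJ⟩ : Fin J) k = ε k := by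
      by_cases h : k = (⟨0, hJ⟩ : Fin J)
      · simp [hu, if_pos h, h, hβ0]
      · simp [hu, if_neg h]
    linarith
end

section
/- Let J ≥ 1 be an integer and let q be a probability mass function (PMF) on Fin J → Fin J such that every d in the support of q has a default choice. Then there exist β : Fin J → ℝ with β j ≥ 0 for all j, a probability measure μ on Fin J → ℝ that is absolutely continuous with respect to the Lebesgue (volume) measure, and a measurable map D : (Fin J → ℝ) → (Fin J → Fin J) such that: (i) for μ-almost every ε and every z ∈ Fin J, D(ε)(z) is the unique strict maximizer of the perturbed utilities under instrument z, i.e. β m · 1{m = z} + ε m < β (D(ε)(z)) · 1{D(ε)(z) = z} + ε (D(ε)(z)) for all m ≠ D(ε)(z); and (ii) the pushforward of μ under D equals (the measure associated with) q. -/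
/-!
Take `β ≡ 1` and let `D ε` send each `z` to the strict maximizer of `1{m = z} + ε m`.
For `d` with default `j₀`, the shock vector `c` with `c j₀ = 1/2`, `c j = 0` for the other
fixed points and `c j = -1` elsewhere makes `d z` beat every other choice under `z` by at
least `1/2`, so `D = d` on the sup-norm ball of radius `1/4` around `c`. Mixing the uniform
distributions on these balls with weights `q d` gives an absolutely continuous `μ` with
`D₊μ = q`.
-/

open MeasureTheory Metric

namespace AdditiveRandomUtility

section StrictArgmax

variable {ι : Type*}

def IsStrictArgmax (f : ι → ℝ) (i : ι) : Prop :=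
  ∀ j ≠ i, f j < f i

theorem IsStrictArgmax.unique {f : ι → ℝ} {i j : ι} (hi : IsStrictArgmax f i)
    (hj : IsStrictArgmax f j) : i = j := by
  by_contra hij
  exact lt_asymm (hi j (Ne.symm hij)) (hj i hij)

theorem IsStrictArgmax.of_dist_lt [Fintype ι] {f g : ι → ℝ} {i : ι} {r : ℝ}
    (hf : ∀ j ≠ i, f j + 2 * r ≤ f i) (hfg : dist g f < r) : IsStrictArgmax g i := by
  have hclose : ∀ j, |g j - f j| < r := fun j =>
    (Real.dist_eq _ _ ▸ dist_le_pi_dist g f j).trans_lt hfg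
  intro j hj
  have := hf j hj
  have := abs_lt.1 (hclose i)
  have := abs_lt.1 (hclose j)
  linarith

open Classical in
noncomputable def strictArgmaxOr (f : ι → ℝ) (i₀ : ι) : ι :=
  if h : ∃ i, IsStrictArgmax f i then h.choose else i₀

theorem strictArgmaxOr_eq {f : ι → ℝ} {i : ι} (h : IsStrictArgmax f i) (i₀ : ι) :
    strictArgmaxOr f i₀ = i := by
  have hex : ∃ i, IsStrictArgmax f i := ⟨i, h⟩
  rw [strictArgmaxOr, dif_pos hex]
  exact hex.choose_spec.unique h

theorem strictArgmaxOr_eq_iff {f : ι → ℝ} {i i₀ : ι} :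
    strictArgmaxOr f i₀ = i ↔ IsStrictArgmax f i ∨ (∀ j, ¬IsStrictArgmax f j) ∧ i₀ = i := by
  by_cases hex : ∃ j, IsStrictArgmax f j
  · obtain ⟨j, hj⟩ := hex
    rw [strictArgmaxOr_eq hj]
    exact ⟨fun h => .inl (h ▸ hj), fun h => h.elim hj.unique fun h' => (h'.1 j hj).elim⟩
  · push Not at hex
    rw [strictArgmaxOr, dif_neg (not_exists.2 hex)]
    simp [hex]

variable [Finite ι] {X : Type*} [MeasurableSpace X] {F : X → ι → ℝ}

theorem measurableSet_isStrictArgmax (hF : ∀ j, Measurable fun x => F x j) (i : ι) :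
    MeasurableSet {x | IsStrictArgmax (F x) i} := by
  simp only [IsStrictArgmax, Set.ofPred_forall]
  exact .iInter fun j => .iInter fun _ => measurableSet_lt (hF j) (hF i)

theorem measurable_strictArgmaxOr [MeasurableSpace ι] [MeasurableSingletonClass ι]
    (hF : ∀ j, Measurable fun x => F x j) (i₀ : ι) :
    Measurable fun x => strictArgmaxOr (F x) i₀ := by
  refine measurable_to_countable' fun i => ?_
  simp only [Set.preimage, Set.mem_singleton_iff, strictArgmaxOr_eq_iff, Set.ofPred_or,
    Set.ofPred_and, Set.ofPred_forall]
  exact (measurableSet_isStrictArgmax hF i).union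
    ((MeasurableSet.iInter fun j => (measurableSet_isStrictArgmax hF j).compl).inter (.const _))

end StrictArgmax

section Mixture

variable {α X : Type*} [MeasurableSpace X]

noncomputable def mixture (q : PMF α) (ν : α → Measure X) : Measure X :=
  Measure.sum fun a => q a • ν a

variable (q : PMF α) {ν : α → Measure X}

theorem isProbabilityMeasure_mixture [∀ a, IsProbabilityMeasure (ν a)] :
    IsProbabilityMeasure (mixture q ν) := by
  constructor
  simp [mixture, PMF.tsum_coe]

variable [Countable α]

theorem mixture_absolutelyContinuous {m : Measure X} (hν : ∀ a, ν a ≪ m) :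
    mixture q ν ≪ m := fun s hs => by
  simp [mixture, Measure.sum_apply_of_countable, hν _ hs]

theorem ae_mixture {p : X → Prop} (hp : ∀ a ∈ q.support, ∀ᵐ x ∂ν a, p x) :
    ∀ᵐ x ∂mixture q ν, p x := by
  refine Measure.ae_sum_iff.2 fun a => ?_
  by_cases ha : q a = 0
  · simp [ha]
  · exact Measure.smul_absolutelyContinuous.ae_le (hp a ((q.mem_support_iff a).2 ha))

theorem map_mixture [MeasurableSpace α] [MeasurableSingletonClass α]
    [∀ a, IsProbabilityMeasure (ν a)] {D : X → α} (hD : Measurable D)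
    (hν : ∀ a ∈ q.support, ∀ᵐ x ∂ν a, D x = a) :
    (mixture q ν).map D = q.toMeasure := by
  have hcomp : ∀ a, q a • (ν a).map D = q.toMeasure {a} • Measure.dirac a := fun a => by
    rw [q.toMeasure_apply_singleton a (measurableSet_singleton a)]
    by_cases ha : q a = 0
    · simp [ha]
    · rw [Measure.map_congr (hν a ((q.mem_support_iff a).2 ha)), Measure.map_const,
        measure_univ, one_smul]
  rw [mixture, Measure.map_sum hD.aemeasurable]
  simp only [Measure.map_smul, hcomp, Measure.sum_smul_dirac]

end Mixture

section Utility

variable {ι : Type*} [DecidableEq ι]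

def utility (β ε : ι → ℝ) (z m : ι) : ℝ :=
  β m * (if m = z then 1 else 0) + ε m

theorem dist_utility [Fintype ι] (β ε ε' : ι → ℝ) (z : ι) :
    dist (utility β ε z) (utility β ε' z) = dist ε ε' :=
  dist_add_left (fun m => β m * (if m = z then 1 else 0)) ε ε'

/-- For `d` with a default choice, `j` is reached from some other `i` only if it is that
default, so this is the shock vector `c` of the proof without having to choose `j₀`. -/
noncomputable def anchor (d : ι → ι) (j : ι) : ℝ :=
  open Classical in
  if ∃ i, i ≠ j ∧ d i = j then 1 / 2 else if d j = j then 0 else -1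

theorem anchor_margin {d : ι → ι} (hd : ∃ j₀, ∀ j, d j = j ∨ d j = j₀) (z m : ι)
    (hm : m ≠ d z) : utility 1 (anchor d) z m + 1 / 2 ≤ utility 1 (anchor d) z (d z) := by
  obtain ⟨j₀, hj₀⟩ := hd
  have hle : ∀ j, anchor d j ≤ 1 / 2 := fun j => by
    unfold anchor; split_ifs <;> norm_num
  have htarget : ∀ i j, i ≠ j → d i = j → j = j₀ := fun i j hij hdi =>
    hdi ▸ (hj₀ i).resolve_left (hdi ▸ hij.symm)
  by_cases hz : d z = z
  · have hmz : m ≠ z := hz ▸ hm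
    have : 0 ≤ anchor d z := by unfold anchor; split_ifs <;> norm_num
    simp only [utility, hz, hmz, Pi.one_apply, if_true, if_false]
    linarith [hle m]
  · have hdz : d z = j₀ := (hj₀ z).resolve_left hz
    have hdefault : anchor d (d z) = 1 / 2 := if_pos ⟨z, fun h => hz h.symm, rfl⟩
    have hother : ∀ j ≠ j₀, anchor d j = if d j = j then 0 else -1 := fun j hj =>
      if_neg fun ⟨i, hij, hdi⟩ => hj (htarget i j hij hdi)
    have hzj₀ : z ≠ j₀ := fun h => hz (hdz.trans h.symm)
    simp only [utility, hdefault, hz, Pi.one_apply, if_false]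
    by_cases hmz : m = z
    · subst hmz
      simp [hother m hzj₀, hz]
    · simp only [hmz, if_false]
      have := hother m (hdz ▸ hm)
      split_ifs at this <;> linarith

theorem isStrictArgmax_utility_of_mem_ball [Fintype ι] {d : ι → ι}
    (hd : ∃ j₀, ∀ j, d j = j ∨ d j = j₀) {ε : ι → ℝ} (hε : ε ∈ ball (anchor d) (1 / 4))
    (z : ι) : IsStrictArgmax (utility 1 ε z) (d z) :=
  IsStrictArgmax.of_dist_lt (f := utility 1 (anchor d) z) (r := 1 / 4)
    (fun m hm => by linarith [anchor_margin hd z m hm]) (by rwa [dist_utility])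

noncomputable def choice (ε : ι → ℝ) (z : ι) : ι :=
  strictArgmaxOr (utility 1 ε z) z

theorem choice_eq_of_mem_ball [Fintype ι] {d : ι → ι}
    (hd : ∃ j₀, ∀ j, d j = j ∨ d j = j₀) {ε : ι → ℝ} (hε : ε ∈ ball (anchor d) (1 / 4)) :
    choice ε = d :=
  funext fun z => strictArgmaxOr_eq (isStrictArgmax_utility_of_mem_ball hd hε z) z

theorem measurable_choice [Finite ι] [MeasurableSpace ι] [MeasurableSingletonClass ι] :
    Measurable (choice : (ι → ℝ) → ι → ι) :=
  measurable_pi_lambda _ fun z =>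
    measurable_strictArgmaxOr (fun m => measurable_const.add (measurable_pi_apply m)) z

end Utility

end AdditiveRandomUtility

open AdditiveRandomUtility ProbabilityTheory

theorem stmt_3_general (J : ℕ) (q : PMF (Fin J → Fin J))
    (hq : ∀ d ∈ q.support, ∃ jstar : Fin J, ∀ j, d j = j ∨ d j = jstar) :
    ∃ (β : Fin J → ℝ) (μ : Measure (Fin J → ℝ)) (D : (Fin J → ℝ) → (Fin J → Fin J)),
      (∀ j, 0 ≤ β j) ∧
      IsProbabilityMeasure μ ∧ μ ≪ volume ∧ Measurable D ∧
      (∀ᵐ ε ∂μ, ∀ z : Fin J, ∀ m ≠ D ε z,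
        β m * (if m = z then (1 : ℝ) else 0) + ε m
          < β (D ε z) * (if D ε z = z then (1 : ℝ) else 0) + ε (D ε z)) ∧
      μ.map D = q.toMeasure := by
  set ν : (Fin J → Fin J) → Measure (Fin J → ℝ) := fun d => volume[|ball (anchor d) (1 / 4)]
  have hν : ∀ d, IsProbabilityMeasure (ν d) := fun d =>
    cond_isProbabilityMeasure_of_finite (measure_ball_pos _ _ (by norm_num)).ne'
      measure_ball_lt_top.ne
  have hball : ∀ d, ∀ᵐ ε ∂ν d, ε ∈ ball (anchor d) (1 / 4) := fun d =>
    ae_cond_mem isOpen_ball.measurableSet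
  refine ⟨1, mixture q ν, choice, fun _ => zero_le_one, isProbabilityMeasure_mixture q,
    mixture_absolutelyContinuous q fun _ => cond_absolutelyContinuous, measurable_choice,
    ae_mixture q fun d hd => (hball d).mono fun ε hε => ?_,
    map_mixture q measurable_choice fun d hd =>
      (hball d).mono fun ε hε => choice_eq_of_mem_ball (hq d hd) hε⟩
  rw [choice_eq_of_mem_ball (hq d hd) hε]
  exact isStrictArgmax_utility_of_mem_ball (hq d hd) hε

/-- Lemma 2 of the paper (Q₂ ⊆ Q₁): every distribution of potential
treatments satisfying the default-choice restriction is generated by an additive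
random utility model. -/
theorem stmt_3 (J : ℕ) (hJ : 1 ≤ J) (q : PMF (Fin J → Fin J))
    (hq : ∀ d ∈ q.support, ∃ jstar : Fin J, ∀ j, d j = j ∨ d j = jstar) :
    ∃ (β : Fin J → ℝ) (μ : Measure (Fin J → ℝ)) (D : (Fin J → ℝ) → (Fin J → Fin J)),
      (∀ j, 0 ≤ β j) ∧
      IsProbabilityMeasure μ ∧ μ ≪ volume ∧ Measurable D ∧
      (∀ᵐ ε ∂μ, ∀ z : Fin J, ∀ m ≠ D ε z,
        β m * (if m = z then (1 : ℝ) else 0) + ε m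
          < β (D ε z) * (if D ε z = z then (1 : ℝ) else 0) + ε (D ε z)) ∧
      μ.map D = q.toMeasure :=
  stmt_3_general J q hq
end

section
/- Let J ≥ 2 be an integer and let q be a probability mass function (PMF) on Fin J → Fin J such that every d in the support of q has a default choice. Then for every σ : Fin J → Fin J with σ j ≠ j for all j, one has ∑_{j ∈ Fin J} q({d : Fin J → Fin J | d (σ j) = j}) ≤ 1. -/
/-!
A map with a default choice `j*` can satisfy `d (σ j) = j` only for `j = j*`: otherwise
`d (σ j) = σ j ≠ j`. So for a fixed-point-free `σ` the events `{d | d (σ j) = j}` are pairwise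
disjoint on the support of `q`, and their probabilities add up to at most `1`.
-/

open scoped ENNReal

theorem Finset.sum_indicator_le_of_subsingleton {ι α : Type*} [Fintype ι] (s : ι → Set α)
    (f : α → ℝ≥0∞) (a : α) (h : {i | a ∈ s i}.Subsingleton) :
    ∑ i, (s i).indicator f a ≤ f a := by
  by_cases ha : ∃ i, a ∈ s i
  · obtain ⟨i, hi⟩ := ha
    rw [Finset.sum_eq_single i
      (fun k _ hk ↦ Set.indicator_of_notMem (s := s k) (fun hak ↦ hk (h hak hi)) f) (by simp)]
    exact Set.indicator_le_self _ _ _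
  · push Not at ha
    simp [Set.indicator_of_notMem (ha _)]

theorem PMF.sum_toOuterMeasure_le_one {ι α : Type*} [Fintype ι] (q : PMF α) (s : ι → Set α)
    (h : ∀ a ∈ q.support, {i | a ∈ s i}.Subsingleton) :
    ∑ i, q.toOuterMeasure (s i) ≤ 1 := by
  calc ∑ i, q.toOuterMeasure (s i)
      = ∑' a, ∑ i, (s i ∩ q.support).indicator q a := by
        rw [Summable.tsum_finsetSum fun _ _ ↦ ENNReal.summable]
        refine Finset.sum_congr rfl fun i _ ↦ ?_
        rw [← q.toOuterMeasure_apply_inter_support, PMF.toOuterMeasure_apply]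
    _ ≤ ∑' a, q a := ENNReal.tsum_le_tsum fun a ↦
        Finset.sum_indicator_le_of_subsingleton _ _ a fun i hi _ hk ↦ h a hi.2 hi.1 hk.1
    _ = 1 := q.tsum_coe

theorem subsingleton_setOf_apply_eq_of_default {J : Type*} {d σ : J → J} {jstar : J}
    (hd : ∀ j, d j = j ∨ d j = jstar) (hσ : ∀ j, σ j ≠ j) :
    {j | d (σ j) = j}.Subsingleton := by
  refine (Set.subsingleton_singleton (a := jstar)).anti fun j (hj : d (σ j) = j) ↦ ?_
  rcases hd (σ j) with hfix | hdefault
  · exact absurd (hfix.symm.trans hj) (hσ j)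
  · exact hj.symm.trans hdefault

theorem stmt_4_general (J : ℕ) (q : PMF (Fin J → Fin J))
    (hq : ∀ d ∈ q.support, ∃ jstar : Fin J, ∀ j, d j = j ∨ d j = jstar)
    (σ : Fin J → Fin J) (hσ : ∀ j, σ j ≠ j) :
    ∑ j : Fin J, q.toOuterMeasure {d : Fin J → Fin J | d (σ j) = j} ≤ 1 :=
  q.sum_toOuterMeasure_le_one _ fun d hd ↦
    let ⟨_, hdefault⟩ := hq d hd
    subsingleton_setOf_apply_eq_of_default hdefault hσ

/-- Theorem 1 of the paper in the case J₀ = 0, at the level of the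
distribution of potential treatments. -/
theorem stmt_4 (J : ℕ) (hJ : 2 ≤ J) (q : PMF (Fin J → Fin J))
    (hq : ∀ d ∈ q.support, ∃ jstar : Fin J, ∀ j, d j = j ∨ d j = jstar)
    (σ : Fin J → Fin J) (hσ : ∀ j, σ j ≠ j) :
    ∑ j : Fin J, q.toOuterMeasure {d : Fin J → Fin J | d (σ j) = j} ≤ 1 :=
  stmt_4_general J q hq σ hσ
end

section
/- Let J ≥ 2 be an integer and let p : Fin J → Fin J → ℝ satisfy p j z ≥ 0 for all j, z and ∑_{j ∈ Fin J} p j z = 1 for every z. Suppose that for every σ : Fin J → Fin J with σ j ≠ j for all j, one has ∑_{j ∈ Fin J} p j (σ j) ≤ 1. Then for all j, k ∈ Fin J with k ≠ j, p j k ≤ p j j. -/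
/-- the inequalities of Theorem 1 (case J₀ = 0) imply that the
conditional probability of choosing `j` is maximized at `Z = j`. -/
theorem stmt_6 (J : ℕ) (hJ : 2 ≤ J) (p : Fin J → Fin J → ℝ)
    (hpos : ∀ j z, 0 ≤ p j z) (hsum : ∀ z, ∑ j : Fin J, p j z = 1)
    (hineq : ∀ σ : Fin J → Fin J, (∀ j, σ j ≠ j) → ∑ j : Fin J, p j (σ j) ≤ 1) :
    ∀ j k : Fin J, k ≠ j → p j k ≤ p j j := by
  intro j k hkj
  set σ : Fin J → Fin J := fun i => if i = j then k else j with hσ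
  have hvalid : ∀ i, σ i ≠ i := by
    intro i
    by_cases h : i = j
    · simp [hσ, h, hkj]
    · simp [hσ, h, Ne.symm h]
  have h1 := hineq σ hvalid
  have e1 : ∑ i : Fin J, p i (σ i) = p j k + ∑ i ∈ Finset.univ.erase j, p i j := by
    rw [← Finset.add_sum_erase _ _ (Finset.mem_univ j)]
    congr 1
    · simp [hσ]
    · exact Finset.sum_congr rfl (fun i hi => by
        simp [hσ, Finset.ne_of_mem_erase hi])
  have e2 : (1:ℝ) = p j j + ∑ i ∈ Finset.univ.erase j, p i j := by
    rw [← hsum j, ← Finset.add_sum_erase _ _ (Finset.mem_univ j)]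
  rw [e1, e2] at h1
  linarith
end

section
/- Fix integers J and J₀ with 1 ≤ J₀ ≤ J − 2, and let 𝒵 = {z : Fin J | z = 0 ∨ J₀ ≤ z} with base point 0 ∈ 𝒵. Let p : Fin J → 𝒵 → ℝ satisfy p j z ≥ 0 for all j, z and ∑_{j ∈ Fin J} p j z = 1 for every z ∈ 𝒵. Then the following are equivalent: (i) for every σ : Fin J → 𝒵 such that σ j ≠ j (as elements of Fin J) whenever J₀ ≤ j, one has ∑_{j ∈ Fin J} p j (σ j) ≤ 1; (ii) for every j ∈ Fin J and every k ∈ 𝒵 with J₀ ≤ k and k ≠ j (as elements of Fin J), p j k ≤ p j 0. -/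
/-- The instrument set `𝒵 = {z : Fin J | z = 0 ∨ J₀ ≤ z}`. -/
abbrev Zcal (J J₀ : ℕ) : Type := {z : Fin J // (z : ℕ) = 0 ∨ J₀ ≤ (z : ℕ)}

/-- Corollary 1 of the paper: with a base state of the instrument, the
full family of testable inequalities is equivalent to the simpler family comparing
to the base state. -/
theorem stmt_7 (J J₀ : ℕ) (hJ₀ : 1 ≤ J₀) (hJ : J₀ + 2 ≤ J)
    (p : Fin J → Zcal J J₀ → ℝ)
    (hpos : ∀ j z, 0 ≤ p j z) (hsum : ∀ z : Zcal J J₀, ∑ j : Fin J, p j z = 1) :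
    (∀ σ : Fin J → Zcal J J₀, (∀ j : Fin J, J₀ ≤ (j : ℕ) → ((σ j : Fin J) ≠ j)) →
      ∑ j : Fin J, p j (σ j) ≤ 1) ↔
    (∀ (j : Fin J) (k : Zcal J J₀), J₀ ≤ ((k : Fin J) : ℕ) → (k : Fin J) ≠ j →
      p j k ≤ p j ⟨⟨0, by omega⟩, Or.inl rfl⟩) := by
  set z0 : Zcal J J₀ := ⟨⟨0, by omega⟩, Or.inl rfl⟩ with hz0
  constructor
  · intro h j k hk hkj
    classical
    set σ : Fin J → Zcal J J₀ := fun i => if i = j then k else z0 with hσ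
    have hadm : ∀ i : Fin J, J₀ ≤ (i : ℕ) → ((σ i : Fin J) ≠ i) := by
      intro i hi
      by_cases hij : i = j
      · subst hij; simpa [hσ] using hkj
      · simp only [hσ, if_neg hij]
        intro heq
        have : (i : ℕ) = 0 := by rw [← heq]
        omega
    have hs := h σ hadm
    have h1 : ∑ i : Fin J, p i (σ i)
        = p j k + ∑ i ∈ Finset.univ.erase j, p i z0 := by
      rw [← Finset.add_sum_erase _ (fun i => p i (σ i)) (Finset.mem_univ j)]
      have e1 : p j (σ j) = p j k := by simp [hσ]
      have e2 : ∑ i ∈ Finset.univ.erase j, p i (σ i)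
          = ∑ i ∈ Finset.univ.erase j, p i z0 :=
        Finset.sum_congr rfl (fun i hi => by
          simp [hσ, (Finset.mem_erase.mp hi).1])
      rw [e1, e2]
    have h2 : p j z0 + ∑ i ∈ Finset.univ.erase j, p i z0 = 1 := by
      rw [Finset.add_sum_erase _ (fun i => p i z0) (Finset.mem_univ j)]
      exact hsum z0
    rw [h1] at hs
    linarith
  · intro h σ hσ
    calc ∑ j : Fin J, p j (σ j) ≤ ∑ j : Fin J, p j z0 := by
          apply Finset.sum_le_sum
          intro j _
          rcases (σ j).2 with h0 | hk
          · have : σ j = z0 := Subtype.ext (Fin.ext (by simpa using h0))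
            rw [this]
          · by_cases hj : J₀ ≤ (j : ℕ)
            · exact h j (σ j) hk (hσ j hj)
            · have : (σ j : Fin J) ≠ j := by
                intro heq
                rw [heq] at hk; omega
              exact h j (σ j) hk this
      _ = 1 := hsum z0
end

section
/- Let J ≥ 2 be an integer and let p : Fin J → Fin J → ℝ satisfy p j z ≥ 0 for all j, z and ∑_{j ∈ Fin J} p j z = 1 for every z. Suppose that for every σ : Fin J → Fin J with σ j ≠ j for all j, one has ∑_{j ∈ Fin J} p j (σ j) ≤ 1. Then there exists a probability mass function (PMF) q on Fin J → Fin J such that every d in the support of q has a default choice, and for all j, z ∈ Fin J, q({d : Fin J → Fin J | d z = j}) = p j z. -/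
/-!
Let `m k = max_{z ≠ k} p k z`. Applying the hypothesis to a derangement `σ` with
`p k (σ k) = m k` gives `∑ k, m k ≤ 1`, so some probability vector `π` dominates `m`.
Draw the default `k` from `π`, and then, independently for each `z ≠ k`, let `d z = k` with
probability `p k z / π k ≤ 1` and `d z = z` otherwise. For `j ≠ z` this gives
`P(d z = j) = π j * (p j z / π j) = p j z`, and the remaining mass `1 - ∑_{j ≠ z} p j z = p z z`
lands on `d z = z`.
-/

open Finset

section BernoulliProduct

variable {ι : Type*} [Fintype ι]

noncomputable def bernoulliProd (r : ι → ℝ) (S : ι → Bool) : ℝ :=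
  ∏ i, if S i then r i else 1 - r i

lemma bernoulliProd_nonneg {r : ι → ℝ} (h0 : ∀ i, 0 ≤ r i) (h1 : ∀ i, r i ≤ 1)
    (S : ι → Bool) : 0 ≤ bernoulliProd r S :=
  prod_nonneg fun i _ => by split <;> linarith [h0 i, h1 i]

variable [DecidableEq ι]

lemma sum_bernoulliProd (r : ι → ℝ) : ∑ S, bernoulliProd r S = 1 :=
  (Fintype.prod_sum fun i (b : Bool) => if b then r i else 1 - r i).symm.trans (by simp)

lemma sum_ite_apply_prod_bool (f : ι → Bool → ℝ) (i : ι) :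
    ∑ S : ι → Bool, (if S i then ∏ z, f z (S z) else 0) =
      f i true * ∏ z ∈ {i}ᶜ, ∑ b, f z b := by
  set g : ι → Bool → ℝ := fun z b => if z = i ∧ b = false then 0 else f z b
  have hg : ∀ S : ι → Bool, (if S i then ∏ z, f z (S z) else 0) = ∏ z, g z (S z) := by
    intro S
    rw [Fintype.prod_eq_mul_prod_compl i, Fintype.prod_eq_mul_prod_compl i (fun z => g z (S z)),
      prod_congr rfl fun z hz => if_neg fun h => (mem_compl.mp hz) (mem_singleton.mpr h.1)]
    cases S i <;> simp [g]
  rw [sum_congr rfl fun S _ => hg S, ← Fintype.prod_sum, Fintype.prod_eq_mul_prod_compl i,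
    prod_congr rfl fun z hz => sum_congr rfl fun b _ =>
      if_neg fun h => (mem_compl.mp hz) (mem_singleton.mpr h.1)]
  simp [g]

lemma sum_ite_apply_bernoulliProd (r : ι → ℝ) (i : ι) :
    ∑ S, (if S i then bernoulliProd r S else 0) = r i :=
  (sum_ite_apply_prod_bool (fun z b => if b then r z else 1 - r z) i).trans (by simp)

lemma sum_ite_not_apply_bernoulliProd (r : ι → ℝ) (i : ι) :
    ∑ S, (if S i then 0 else bernoulliProd r S) = 1 - r i := by
  rw [← sum_bernoulliProd r, ← sum_ite_apply_bernoulliProd r i, ← sum_sub_distrib]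
  exact sum_congr rfl fun S _ => by split <;> ring

end BernoulliProduct

def defaultChoiceMap {ι : Type*} (k : ι) (S : ι → Bool) (z : ι) : ι := if S z then k else z

lemma defaultChoiceMap_apply_eq_or_eq {ι : Type*} (k : ι) (S : ι → Bool) (z : ι) :
    defaultChoiceMap k S z = z ∨ defaultChoiceMap k S z = k := by
  unfold defaultChoiceMap
  split <;> simp

lemma sum_ite_defaultChoiceMap_eq_bernoulliProd {ι : Type*} [Fintype ι] [DecidableEq ι]
    {r : ι → ℝ} {k : ι} (hk : r k = 0) (j z : ι) :
    ∑ S, (if defaultChoiceMap k S z = j then bernoulliProd r S else 0) =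
      if j = z then 1 - r z else if j = k then r z else 0 := by
  by_cases hjz : j = z
  · subst hjz
    by_cases hkj : k = j
    · subst hkj
      simp [defaultChoiceMap, sum_bernoulliProd, hk]
    · rw [if_pos rfl, ← sum_ite_not_apply_bernoulliProd]
      exact sum_congr rfl fun S _ => by by_cases h : S j <;> simp [defaultChoiceMap, h, hkj]
  · rw [if_neg hjz]
    split_ifs with hkj
    · subst hkj
      rw [← sum_ite_apply_bernoulliProd r z]
      exact sum_congr rfl fun S _ => by
        by_cases h : S z <;> simp [defaultChoiceMap, h, Ne.symm hjz]
    · exact sum_eq_zero fun S _ => by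
        by_cases h : S z <;> simp [defaultChoiceMap, h, Ne.symm hjz, Ne.symm hkj]

theorem PMF.exists_toOuterMeasure_eq_ofReal_sum {α : Type*} [Fintype α] {w : α → ℝ}
    (hw0 : ∀ a, 0 ≤ w a) (hw1 : ∑ a, w a = 1) :
    ∃ q : PMF α, ∀ s : Set α, q.toOuterMeasure s = ENNReal.ofReal (∑ a, s.indicator w a) := by
  have hsum : ∑ a, ENNReal.ofReal (w a) = 1 := by
    rw [← ENNReal.ofReal_sum_of_nonneg fun a _ => hw0 a, hw1, ENNReal.ofReal_one]
  refine ⟨PMF.ofFintype _ hsum, fun s => ?_⟩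
  rw [PMF.toOuterMeasure_apply_fintype, ENNReal.ofReal_sum_of_nonneg
    fun a _ => Set.indicator_nonneg (fun a _ => hw0 a) a]
  exact sum_congr rfl fun a _ =>
    congr_fun (Set.indicator_comp_of_zero (g := ENNReal.ofReal) ENNReal.ofReal_zero) a

theorem exists_forall_ne_and_forall_le_apply {ι : Type*} [Fintype ι] [Nontrivial ι]
    (p : ι → ι → ℝ) : ∃ σ : ι → ι, (∀ k, σ k ≠ k) ∧ ∀ k z, z ≠ k → p k z ≤ p k (σ k) := by
  classical
  have hne : ∀ k : ι, ({k}ᶜ : Finset ι).Nonempty := fun k =>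
    let ⟨z, hz⟩ := exists_ne k; ⟨z, by simpa using hz⟩
  choose σ hσ hmax using fun k => exists_max_image _ (p k) (hne k)
  exact ⟨σ, fun k => by simpa using hσ k, fun k z hz => hmax k z (by simpa using hz)⟩

theorem exists_le_and_sum_eq_one {ι : Type*} [Fintype ι] [Nonempty ι] {m : ι → ℝ}
    (hm : ∑ i, m i ≤ 1) : ∃ π : ι → ℝ, (∀ i, m i ≤ π i) ∧ ∑ i, π i = 1 := by
  classical
  let i₀ : ι := Classical.arbitrary ι
  refine ⟨m + Pi.single i₀ (1 - ∑ i, m i), fun i => ?_, ?_⟩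
  · simp only [Pi.add_apply, le_add_iff_nonneg_right]
    by_cases h : i = i₀
    · subst h; simpa using hm
    · simp [h]
  · simp [sum_add_distrib]

section Construction

variable {ι : Type*} [DecidableEq ι] {p : ι → ι → ℝ} {π : ι → ℝ}

/-- The value at `π k = 0` is junk, harmless because then `p k z = 0` for `z ≠ k`. -/
noncomputable def switchProb (p : ι → ι → ℝ) (π : ι → ℝ) (k z : ι) : ℝ :=
  if z = k then 0 else p k z / π k

lemma switchProb_self (k : ι) : switchProb p π k k = 0 := if_pos rfl

lemma switchProb_mem_Icc (hp : ∀ j z, 0 ≤ p j z) (hπ : ∀ k, 0 ≤ π k)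
    (hpπ : ∀ k z, z ≠ k → p k z ≤ π k) (k z : ι) : switchProb p π k z ∈ Set.Icc 0 1 := by
  unfold switchProb
  split_ifs with h
  · simp
  · exact ⟨div_nonneg (hp k z) (hπ k), div_le_one_of_le₀ (hpπ k z h) (hπ k)⟩

lemma mul_switchProb (hp : ∀ j z, 0 ≤ p j z) (hpπ : ∀ k z, z ≠ k → p k z ≤ π k) {k z : ι}
    (h : z ≠ k) : π k * switchProb p π k z = p k z := by
  rw [switchProb, if_neg h]
  rcases ((hp k z).trans (hpπ k z h)).eq_or_lt with h0 | h0
  · rw [← h0, zero_mul]; exact le_antisymm (hp k z) (h0 ▸ hpπ k z h)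
  · exact mul_div_cancel₀ _ h0.ne'

variable [Fintype ι]

lemma sum_mul_ite_switchProb (hp : ∀ j z, 0 ≤ p j z) (hpπ : ∀ k z, z ≠ k → p k z ≤ π k)
    (hsum : ∀ z, ∑ j, p j z = 1) (hπ1 : ∑ k, π k = 1) (j z : ι) :
    ∑ k, π k * (if j = z then 1 - switchProb p π k z else if j = k then switchProb p π k z else 0)
      = p j z := by
  by_cases hjz : j = z
  · subst hjz
    have hoff : ∑ k, π k * switchProb p π k j = ∑ k ∈ {j}ᶜ, p k j := by
      rw [Fintype.sum_eq_add_sum_compl j, switchProb_self, mul_zero, zero_add]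
      exact sum_congr rfl fun k hk => mul_switchProb hp hpπ (by simpa [eq_comm] using hk)
    have hcol := hsum j
    rw [Fintype.sum_eq_add_sum_compl j] at hcol
    simp only [if_true, mul_sub, mul_one, sum_sub_distrib, hπ1, hoff]
    linarith
  · simp [hjz, mul_ite, mul_switchProb hp hpπ (Ne.symm hjz)]

theorem exists_pmf_defaultChoice_of_le (hp : ∀ j z, 0 ≤ p j z) (hsum : ∀ z, ∑ j, p j z = 1)
    (hπ : ∀ k, 0 ≤ π k) (hπ1 : ∑ k, π k = 1) (hpπ : ∀ k z, z ≠ k → p k z ≤ π k) :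
    ∃ q : PMF (ι → ι), (∀ d ∈ q.support, ∃ k, ∀ j, d j = j ∨ d j = k) ∧
      ∀ j z, q.toOuterMeasure {d | d z = j} = ENNReal.ofReal (p j z) := by
  set r := switchProb p π
  have hr := switchProb_mem_Icc hp hπ hpπ
  set w : ι × (ι → Bool) → ℝ := fun x => π x.1 * bernoulliProd (r x.1) x.2
  have hw0 : ∀ x, 0 ≤ w x := fun x =>
    mul_nonneg (hπ x.1) (bernoulliProd_nonneg (fun z => (hr x.1 z).1) (fun z => (hr x.1 z).2) x.2)
  have hw1 : ∑ x, w x = 1 := by simp [w, Fintype.sum_prod_type, ← mul_sum, sum_bernoulliProd, hπ1]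
  obtain ⟨q, hq⟩ := PMF.exists_toOuterMeasure_eq_ofReal_sum hw0 hw1
  refine ⟨q.map fun x => defaultChoiceMap x.1 x.2, ?_, fun j z => ?_⟩
  · rintro d hd
    rw [PMF.support_map] at hd
    obtain ⟨x, -, rfl⟩ := hd
    exact ⟨x.1, defaultChoiceMap_apply_eq_or_eq x.1 x.2⟩
  · rw [PMF.toOuterMeasure_map_apply, hq, ← sum_mul_ite_switchProb hp hpπ hsum hπ1 j z]
    congr 1
    rw [Fintype.sum_prod_type]
    refine sum_congr rfl fun k _ => ?_
    rw [← sum_ite_defaultChoiceMap_eq_bernoulliProd (switchProb_self k), mul_sum]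
    refine sum_congr rfl fun S _ => ?_
    simp [Set.indicator_apply, w, r]

end Construction

/-- Theorem 2 of the paper (sharpness) in the case J₀ = 0. -/
theorem stmt_8 (J : ℕ) (hJ : 2 ≤ J) (p : Fin J → Fin J → ℝ)
    (hpos : ∀ j z, 0 ≤ p j z) (hsum : ∀ z, ∑ j : Fin J, p j z = 1)
    (hineq : ∀ σ : Fin J → Fin J, (∀ j, σ j ≠ j) → ∑ j : Fin J, p j (σ j) ≤ 1) :
    ∃ q : PMF (Fin J → Fin J),
      (∀ d ∈ q.support, ∃ jstar : Fin J, ∀ j, d j = j ∨ d j = jstar) ∧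
      (∀ j z : Fin J,
        q.toOuterMeasure {d : Fin J → Fin J | d z = j} = ENNReal.ofReal (p j z)) := by
  have : Nontrivial (Fin J) := Fin.nontrivial_iff_two_le.mpr hJ
  obtain ⟨σ, hσ, hmax⟩ := exists_forall_ne_and_forall_le_apply p
  obtain ⟨π, hmπ, hπ1⟩ := exists_le_and_sum_eq_one (hineq σ hσ)
  exact exists_pmf_defaultChoice_of_le hpos hsum (fun k => (hpos k (σ k)).trans (hmπ k)) hπ1
    fun k z hz => (hmax k z hz).trans (hmπ k)
end

section
/- Let J ≥ 2 be an integer and let μ be a probability measure on (Fin J → ℝ) × (Fin J → Fin J) such that for μ-almost every pair (y, d), the map d has a default choice. Let B : Fin J → Fin J → Set ℝ be a family of Borel sets such that for each j ∈ Fin J, the sets B j z for z ≠ j are pairwise disjoint and their union over z ≠ j is ℝ. Then ∑_{j ∈ Fin J} ∑_{z ≠ j} μ({(y, d) | y j ∈ B j z and d z = j}) ≤ 1. -/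
open MeasureTheory

/-- necessity of condition (a) in Theorem 3 of the paper (case J₀ = 0),
at the level of the joint distribution of potential outcomes and potential treatments. -/
theorem stmt_10 (J : ℕ) (hJ : 2 ≤ J)
    (μ : Measure ((Fin J → ℝ) × (Fin J → Fin J))) [IsProbabilityMeasure μ]
    (hdef : ∀ᵐ yd ∂μ, ∃ jstar : Fin J, ∀ j, yd.2 j = j ∨ yd.2 j = jstar)
    (B : Fin J → Fin J → Set ℝ)
    (hBmeas : ∀ j z, MeasurableSet (B j z))
    (hBdisj : ∀ j : Fin J, ∀ z ≠ j, ∀ z' ≠ j, z ≠ z' → Disjoint (B j z) (B j z'))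
    (hBunion : ∀ j : Fin J, (⋃ z ∈ ({j}ᶜ : Set (Fin J)), B j z) = Set.univ) :
    ∑ j : Fin J, ∑ z ∈ Finset.univ.erase j,
      μ {yd : (Fin J → ℝ) × (Fin J → Fin J) | yd.1 j ∈ B j z ∧ yd.2 z = j} ≤ 1 := by
  classical
  set P : ((Fin J → ℝ) × (Fin J → Fin J)) → Prop :=
    fun yd => ∃ jstar : Fin J, ∀ j, yd.2 j = j ∨ yd.2 j = jstar with hP
  have hnull : μ {yd | ¬ P yd} = 0 := by
    have := hdef
    rw [Filter.eventually_iff, mem_ae_iff, Set.compl_setOf] at this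
    exact this
  set N := toMeasurable μ {yd | ¬ P yd} with hN
  have hNmeas : MeasurableSet N := measurableSet_toMeasurable _ _
  have hNnull : μ N = 0 := by rw [hN, measure_toMeasurable]; exact hnull
  set S : Fin J → Fin J → Set ((Fin J → ℝ) × (Fin J → Fin J)) :=
    fun j z => {yd | yd.1 j ∈ B j z ∧ yd.2 z = j} with hS
  have hSmeas : ∀ j z, MeasurableSet (S j z) := by
    intro j z
    have h : S j z = ((fun yd : (Fin J → ℝ) × (Fin J → Fin J) => yd.1 j) ⁻¹' B j z) ∩
        ((fun yd : (Fin J → ℝ) × (Fin J → Fin J) => yd.2 z) ⁻¹' {j}) := rfl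
    rw [h]
    exact (((measurable_pi_apply j).comp measurable_fst) (hBmeas j z)).inter
      (((measurable_pi_apply z).comp measurable_snd) (measurableSet_singleton j))
  set T : ((j : Fin J) × Fin J) → Set ((Fin J → ℝ) × (Fin J → Fin J)) :=
    fun p => S p.1 p.2 \ N with hT
  set s : Finset ((j : Fin J) × Fin J) :=
    Finset.univ.sigma (fun j => Finset.univ.erase j) with hs
  have hmem : ∀ p : (j : Fin J) × Fin J, p ∈ s ↔ p.2 ≠ p.1 := by
    intro p
    simp [hs, Finset.mem_sigma, Finset.mem_erase]
  have hμT : ∀ p, μ (T p) = μ (S p.1 p.2) := by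
    intro p
    exact measure_diff_null hNnull
  have hdisj : Set.PairwiseDisjoint (↑s) T := by
    intro a ha b hb hab
    apply Set.disjoint_left.mpr
    intro x hxa hxb
    have hPx : P x := by
      by_contra h
      exact hxa.2 (subset_toMeasurable _ _ h)
    have ha2 : a.2 ≠ a.1 := (hmem a).1 ha
    have hb2 : b.2 ≠ b.1 := (hmem b).1 hb
    obtain ⟨hya, hda⟩ := hxa.1
    obtain ⟨hyb, hdb⟩ := hxb.1
    by_cases h1 : a.1 = b.1
    · have h2 : a.2 ≠ b.2 := by
        intro h2
        exact hab (Sigma.ext h1 (by rw [h2]))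
      have := hBdisj a.1 a.2 ha2 b.2 (h1 ▸ hb2) h2
      rw [Set.disjoint_left] at this
      exact this hya (h1 ▸ hyb)
    · obtain ⟨jstar, hstar⟩ := hPx
      have h1' : a.1 = jstar := by
        rcases hstar a.2 with h | h
        · exact absurd (hda.symm.trans h) ha2.symm
        · exact hda ▸ h
      have h2' : b.1 = jstar := by
        rcases hstar b.2 with h | h
        · exact absurd (hdb.symm.trans h) hb2.symm
        · exact hdb ▸ h
      exact h1 (h1'.trans h2'.symm)
  calc ∑ j : Fin J, ∑ z ∈ Finset.univ.erase j,
      μ {yd : (Fin J → ℝ) × (Fin J → Fin J) | yd.1 j ∈ B j z ∧ yd.2 z = j}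
      = ∑ p ∈ s, μ (S p.1 p.2) := by rw [hs, Finset.sum_sigma]
    _ = ∑ p ∈ s, μ (T p) := by simp_rw [hμT]
    _ = μ (⋃ p ∈ s, T p) := (measure_biUnion_finset hdisj (fun p _ => (hSmeas p.1 p.2).diff hNmeas)).symm
    _ ≤ μ Set.univ := measure_mono (Set.subset_univ _)
    _ = 1 := measure_univ
end

section
/- Let J ≥ 2 be an integer and let P be a Borel probability measure on ℝ × Fin J × Fin J, with coordinates written (Y, D, Z). Assume: (i) P(Z = z) > 0 for every z ∈ Fin J; (ii) for every family of Borel sets B : Fin J → Fin J → Set ℝ such that for each j the sets B j z for z ≠ j are pairwise disjoint with union ℝ, one has ∑_{j ∈ Fin J} ∑_{z ≠ j} P(Y ∈ B j z, D = j, Z = z) / P(Z = z) ≤ 1 (division taken in [0,∞]); and (iii) for every Borel set B ⊆ ℝ and all j, k ∈ Fin J with k ≠ j, P(Y ∈ B, D = j, Z = k) / P(Z = k) ≤ P(Y ∈ B, D = j, Z = j) / P(Z = j). Then there exists a probability measure μ on (Fin J → ℝ) × (Fin J → Fin J) such that for μ-almost every (y, d) the map d has a default choice, and the pushforward of the product measure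 μ ⊗ ν under the map ((y, d), z) ↦ (y (d z), d z, z) equals P, where ν is the marginal distribution of P in the Z-coordinate. -/
open MeasureTheory Finset
open scoped ENNReal

/-!
Write `Q j z` for the law of `Y` on `{D = j}` given `Z = z` and `g j z` for its density with
respect to `∑ z, Q j z`. Units that default to `j` get the outcome density `max_{z ≠ j} g j z`:
inequality (a), applied to a partition on which each `g j z` attains this maximum, bounds their
total mass by one, and inequality (b) makes `Q j j` minus their law a nonnegative residual.
A defaulter to `j` with outcome `y` keeps `j` under each instrument `z ≠ j` independently with
probability `g j z y / max_{w ≠ j} g j w y` and complies with the others (the set `S` of its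
type `(j, S)`); this reproduces `Q j z` for `z ≠ j`. The units
complying at `j` draw `y j` from the normalised residual; their total weight is the residual mass,
so `Q j j` is reproduced as well.
-/

namespace ENNReal

variable {ι : Type*} [DecidableEq ι] {U : Finset ι} {p : ι → ℝ≥0∞}

theorem sum_powerset_prod_sdiff_mul_prod_one_sub (hp : ∀ i ∈ U, p i ≤ 1) :
    ∑ S ∈ U.powerset, (∏ i ∈ U \ S, p i) * ∏ i ∈ S, (1 - p i) = 1 := by
  simp_rw [mul_comm (∏ i ∈ _ \ _, p i), ← prod_add]
  exact prod_eq_one fun i hi => tsub_add_cancel_of_le (hp i hi)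

theorem sum_powerset_erase_prod_sdiff_mul_prod_one_sub (hp : ∀ i ∈ U, p i ≤ 1) {k : ι}
    (hk : k ∈ U) :
    ∑ S ∈ (U.erase k).powerset, (∏ i ∈ U \ S, p i) * ∏ i ∈ S, (1 - p i) = p k := by
  have hsplit : ∀ S ∈ (U.erase k).powerset,
      (∏ i ∈ U \ S, p i) * ∏ i ∈ S, (1 - p i)
        = p k * ((∏ i ∈ U.erase k \ S, p i) * ∏ i ∈ S, (1 - p i)) := by
    intro S hS
    have hkS : k ∉ S := fun h => by simpa using mem_powerset.mp hS h
    rw [← mul_assoc, erase_sdiff_comm, mul_prod_erase _ _ (mem_sdiff.mpr ⟨hk, hkS⟩)]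
  rw [sum_congr rfl hsplit, ← mul_sum,
    sum_powerset_prod_sdiff_mul_prod_one_sub fun i hi => hp i (mem_of_mem_erase hi), mul_one]

end ENNReal

theorem Finset.powerset_filter_notMem {ι : Type*} [DecidableEq ι] (s : Finset ι) (a : ι) :
    s.powerset.filter (a ∉ ·) = (s.erase a).powerset := by
  ext S
  simp [subset_erase]

theorem MeasurableSet.exists_disjoint_iUnion_eq {α ι : Type*} [MeasurableSpace α] [Finite ι]
    {f : ι → Set α} (hf : ∀ i, MeasurableSet (f i)) :
    ∃ g : ι → Set α, (∀ i, MeasurableSet (g i)) ∧ (∀ i, g i ⊆ f i) ∧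
      Pairwise (Function.onFun Disjoint g) ∧ ⋃ i, g i = ⋃ i, f i := by
  obtain ⟨n, ⟨e⟩⟩ := Finite.exists_equiv_fin ι
  refine ⟨fun i => disjointed (f ∘ e.symm) (e i), fun i => ?_, fun i => ?_, ?_, ?_⟩
  · change MeasurableSet (disjointed _ (e i))
    rw [disjointed_eq_inter_compl]
    exact (hf _).inter (.iInter fun k => .iInter fun _ => (hf _).compl)
  · simpa using disjointed_subset (f ∘ e.symm) (e i)
  · exact fun i j hij => disjoint_disjointed _ (e.injective.ne hij)
  · exact (e.iSup_comp (g := disjointed (f ∘ e.symm))).trans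
      (iUnion_disjointed.trans (e.symm.iSup_comp (g := f)))

namespace MeasureTheory

variable {α : Type*} [MeasurableSpace α]

namespace Measure

theorem rnDeriv_le_rnDeriv_of_le {μ₁ μ₂ ν : Measure α} [SigmaFinite ν]
    [μ₂.HaveLebesgueDecomposition ν] (h : μ₁ ≤ μ₂) (h₂ : μ₂ ≪ ν) :
    μ₁.rnDeriv ν ≤ᵐ[ν] μ₂.rnDeriv ν :=
  ae_le_of_forall_setLIntegral_le_of_sigmaFinite (measurable_rnDeriv _ _) fun s _ _ =>
    (setLIntegral_rnDeriv_le s).trans ((h s).trans (setLIntegral_rnDeriv h₂ s).ge)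

theorem finsetSum_withDensity {ι : Type*} (s : Finset ι) (μ : Measure α) {f : ι → α → ℝ≥0∞}
    (hf : ∀ i ∈ s, Measurable (f i)) :
    ∑ i ∈ s, μ.withDensity (f i) = μ.withDensity (∑ i ∈ s, f i) := by
  ext B hB
  simp only [finsetSum_apply, withDensity_apply _ hB, Finset.sum_apply]
  exact (lintegral_finsetSum' _ fun i hi => (hf i hi).aemeasurable).symm

theorem prod_dirac_apply_prod {β : Type*} [MeasurableSpace β] [MeasurableSingletonClass β]
    (μ : Measure α) [SFinite μ] (b : β) (A : Set α) (D : Set β) [Decidable (b ∈ D)] :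
    μ.prod (dirac b) (A ×ˢ D) = if b ∈ D then μ A else 0 := by
  rw [prod_prod, dirac_apply]
  split_ifs with h <;> simp [h]

instance isFiniteMeasure_update {ι : Type*} [DecidableEq ι] (μ : ι → Measure α)
    [∀ i, IsFiniteMeasure (μ i)] (j : ι) (ν : Measure α) [IsFiniteMeasure ν] (k : ι) :
    IsFiniteMeasure (Function.update μ j ν k) := by
  rcases eq_or_ne k j with rfl | hk
  · rwa [Function.update_self]
  · rw [Function.update_of_ne hk]; infer_instance

theorem pi_update_eval_preimage {ι : Type*} [Fintype ι] [DecidableEq ι] (μ : ι → Measure α)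
    [∀ i, IsProbabilityMeasure (μ i)] (j : ι) (ν : Measure α) [IsFiniteMeasure ν] (i : ι)
    {B : Set α} (hB : MeasurableSet B) :
    Measure.pi (Function.update μ j ν) (Function.eval i ⁻¹' B)
      = if i = j then ν B else ν Set.univ * μ i B := by
  rw [← map_apply (measurable_pi_apply i) hB, pi_map_eval, smul_apply, smul_eq_mul]
  split_ifs with hij
  · subst hij
    rw [prod_eq_one fun k hk => by rw [Function.update_of_ne (ne_of_mem_erase hk), measure_univ],
      Function.update_self, one_mul]
  · rw [prod_eq_single_of_mem j (mem_erase.mpr ⟨Ne.symm hij, mem_univ j⟩)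
      fun k _ hkj => by rw [Function.update_of_ne hkj, measure_univ],
      Function.update_self, Function.update_of_ne hij]

theorem ext_of_prod_singleton {β : Type*} [MeasurableSpace β] [Countable β]
    [MeasurableSingletonClass β] {μ ν : Measure (α × β)} [IsFiniteMeasure μ]
    (h : ∀ s, MeasurableSet s → ∀ b, μ (s ×ˢ {b}) = ν (s ×ˢ {b})) : μ = ν := by
  refine ext_prod fun {s t} hs _ => ?_
  have hst : s ×ˢ t = ⋃ b ∈ t, s ×ˢ {b} := by
    rw [← Set.prod_iUnion₂, Set.biUnion_of_singleton]
  have hdisj : t.PairwiseDisjoint fun b => s ×ˢ ({b} : Set β) := fun b _ b' _ hbb' =>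
    Set.disjoint_prod.mpr (Or.inr (Set.disjoint_singleton.mpr hbb'))
  have hmeas : ∀ b ∈ t, MeasurableSet (s ×ˢ ({b} : Set β)) := fun b _ =>
    hs.prod (measurableSet_singleton b)
  rw [hst, measure_biUnion t.to_countable hdisj hmeas, measure_biUnion t.to_countable hdisj hmeas]
  exact tsum_congr fun b => h s hs b

end Measure

end MeasureTheory

namespace DefaultChoice

section Treatment

variable {ι : Type*}

def HasDefaultChoice (d : ι → ι) : Prop := ∃ j₀, ∀ j, d j = j ∨ d j = j₀

variable [DecidableEq ι]

def treatment (j : ι) (S : Finset ι) (z : ι) : ι := if z ∈ S then z else j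

theorem treatment_self (j : ι) (S : Finset ι) : treatment j S j = j := by
  unfold treatment; split_ifs <;> rfl

theorem treatment_eq_iff_of_ne {j' j z : ι} (hz : z ≠ j) (S : Finset ι) :
    treatment j' S z = j ↔ j' = j ∧ z ∉ S := by
  unfold treatment; split_ifs with h <;> simp [h, hz]

theorem treatment_eq_self_iff_of_ne {j' j : ι} (hj' : j' ≠ j) (S : Finset ι) :
    treatment j' S j = j ↔ j ∈ S := by
  unfold treatment; split_ifs with h <;> simp [h, hj']

theorem hasDefaultChoice_treatment (j : ι) (S : Finset ι) : HasDefaultChoice (treatment j S) :=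
  ⟨j, fun z => by unfold treatment; split_ifs <;> simp⟩

end Treatment

section Model

variable {α ι : Type*} [MeasurableSpace α] [Fintype ι] (Q : ι → ι → Measure α)

noncomputable def refMeasure (j : ι) : Measure α := ∑ w, Q j w

noncomputable def density (j w : ι) : α → ℝ≥0∞ := (Q j w).rnDeriv (refMeasure Q j)

theorem measurable_density (j w : ι) : Measurable (density Q j w) :=
  Measure.measurable_rnDeriv _ _

theorem le_refMeasure (j w : ι) : Q j w ≤ refMeasure Q j :=
  single_le_sum (f := Q j) (fun _ _ => bot_le) (mem_univ w)

variable [DecidableEq ι]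

noncomputable def maxDensity (j : ι) : α → ℝ≥0∞ := (univ.erase j).sup (density Q j)

noncomputable def defaultProb (j w : ι) (y : α) : ℝ≥0∞ := density Q j w y / maxDensity Q j y

noncomputable def typeDensity (j : ι) (S : Finset ι) (y : α) : ℝ≥0∞ :=
  maxDensity Q j y *
    ((∏ w ∈ univ.erase j \ S, defaultProb Q j w y) * ∏ w ∈ S, (1 - defaultProb Q j w y))

noncomputable def typeLaw (j : ι) (S : Finset ι) : Measure α :=
  (refMeasure Q j).withDensity (typeDensity Q j S)

noncomputable def defaulterLaw (j : ι) : Measure α := (refMeasure Q j).withDensity (maxDensity Q j)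

noncomputable def complierResidual (j : ι) : Measure α :=
  (refMeasure Q j).withDensity (density Q j j - maxDensity Q j)

noncomputable def complierMass : ℝ≥0∞ := 1 - ∑ j, defaulterLaw Q j Set.univ

theorem measurable_maxDensity (j : ι) : Measurable (maxDensity Q j) :=
  Finset.sup_induction measurable_const (fun _ h₁ _ h₂ => h₁.sup h₂)
    fun w _ => measurable_density Q j w

theorem measurable_typeDensity (j : ι) (S : Finset ι) : Measurable (typeDensity Q j S) := by
  unfold typeDensity defaultProb
  have := measurable_density Q j
  have := measurable_maxDensity Q j
  fun_prop

theorem density_le_maxDensity {j w : ι} (hw : w ≠ j) (y : α) :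
    density Q j w y ≤ maxDensity Q j y := by
  rw [maxDensity, Finset.sup_apply]
  exact le_sup (f := fun w => density Q j w y) (mem_erase.mpr ⟨hw, mem_univ w⟩)

theorem defaultProb_le_one {j w : ι} (hw : w ≠ j) (y : α) : defaultProb Q j w y ≤ 1 :=
  ENNReal.div_le_of_le_mul (by simpa using density_le_maxDensity Q hw y)

theorem sum_typeDensity (j : ι) (y : α) :
    ∑ S ∈ (univ.erase j).powerset, typeDensity Q j S y = maxDensity Q j y := by
  simp only [typeDensity]
  rw [← mul_sum, ENNReal.sum_powerset_prod_sdiff_mul_prod_one_sub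
    fun w hw => defaultProb_le_one Q (ne_of_mem_erase hw) y, mul_one]

theorem sum_typeDensity_powerset_erase {j z : ι} (hz : z ≠ j) {y : α}
    (hy : maxDensity Q j y < ∞) :
    ∑ S ∈ ((univ.erase j).erase z).powerset, typeDensity Q j S y = density Q j z y := by
  simp only [typeDensity]
  rw [← mul_sum, ENNReal.sum_powerset_erase_prod_sdiff_mul_prod_one_sub
    (fun w hw => defaultProb_le_one Q (ne_of_mem_erase hw) y) (mem_erase.mpr ⟨hz, mem_univ z⟩)]
  rcases eq_or_ne (maxDensity Q j y) 0 with h0 | h0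
  · have := density_le_maxDensity Q hz y
    rw [h0] at this ⊢
    rw [nonpos_iff_eq_zero.mp this, zero_mul]
  · exact ENNReal.mul_div_cancel h0 hy.ne

theorem sum_typeLaw (j : ι) :
    ∑ S ∈ (univ.erase j).powerset, typeLaw Q j S = defaulterLaw Q j := by
  simp only [typeLaw]
  rw [Measure.finsetSum_withDensity _ _ fun S _ => measurable_typeDensity Q j S, defaulterLaw]
  congr 1
  ext y
  simp only [Finset.sum_apply, sum_typeDensity]

theorem typeLaw_le_defaulterLaw (j : ι) (S : Finset ι) : typeLaw Q j S ≤ defaulterLaw Q j := by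
  refine withDensity_mono (ae_of_all _ fun y => mul_le_of_le_one_right zero_le ?_)
  refine mul_le_one' (prod_le_one' fun w hw => ?_) (prod_le_one' fun _ _ => tsub_le_self)
  exact defaultProb_le_one Q (ne_of_mem_erase (mem_sdiff.mp hw).1) y

variable [∀ j z, IsFiniteMeasure (Q j z)]

omit [DecidableEq ι] in
instance (j : ι) : IsFiniteMeasure (refMeasure Q j) := by
  unfold refMeasure; infer_instance

omit [DecidableEq ι] in
theorem withDensity_density (j w : ι) : (refMeasure Q j).withDensity (density Q j w) = Q j w :=
  Measure.withDensity_rnDeriv_eq _ _ (le_refMeasure Q j w).absolutelyContinuous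

theorem ae_maxDensity_lt_top (j : ι) : ∀ᵐ y ∂refMeasure Q j, maxDensity Q j y < ∞ := by
  filter_upwards [ae_all_iff.mpr fun w => Measure.rnDeriv_lt_top (Q j w) (refMeasure Q j)]
    with y hy
  rw [maxDensity, Finset.sup_apply]
  exact (Finset.sup_lt_iff bot_lt_top).mpr fun w _ => hy w

theorem sum_typeLaw_powerset_erase {j z : ι} (hz : z ≠ j) :
    ∑ S ∈ ((univ.erase j).erase z).powerset, typeLaw Q j S = Q j z := by
  simp only [typeLaw]
  rw [Measure.finsetSum_withDensity _ _ fun S _ => measurable_typeDensity Q j S,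
    ← withDensity_density Q j z]
  refine withDensity_congr_ae ?_
  filter_upwards [ae_maxDensity_lt_top Q j] with y hy
  simp only [Finset.sum_apply, sum_typeDensity_powerset_erase Q hz hy]

theorem ae_maxDensity_le_density (hdom : ∀ j k, k ≠ j → Q j k ≤ Q j j) (j : ι) :
    maxDensity Q j ≤ᵐ[refMeasure Q j] density Q j j := by
  have h : ∀ᵐ y ∂refMeasure Q j, ∀ w ∈ univ.erase j, density Q j w y ≤ density Q j j y :=
    (Filter.eventually_all_finset _).mpr fun w hw =>
      Measure.rnDeriv_le_rnDeriv_of_le (hdom j w (ne_of_mem_erase hw))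
        (le_refMeasure Q j j).absolutelyContinuous
  filter_upwards [h] with y hy
  rw [maxDensity, Finset.sup_apply]
  exact Finset.sup_le hy

theorem defaulterLaw_add_complierResidual (hdom : ∀ j k, k ≠ j → Q j k ≤ Q j j) (j : ι) :
    defaulterLaw Q j + complierResidual Q j = Q j j := by
  rw [defaulterLaw, complierResidual, ← withDensity_add_left (measurable_maxDensity Q j),
    ← withDensity_density Q j j]
  refine withDensity_congr_ae ?_
  filter_upwards [ae_maxDensity_le_density Q hdom j] with y hy
  exact add_tsub_cancel_of_le hy

theorem exists_partition_defaulterLaw_eq [Nontrivial ι] (j : ι) :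
    ∃ B : ι → Set α, (∀ z, MeasurableSet (B z)) ∧ Pairwise (Function.onFun Disjoint B) ∧
      ⋃ z ∈ ({j}ᶜ : Set ι), B z = Set.univ ∧
      ∀ z ≠ j, defaulterLaw Q j (B z) = Q j z (B z) := by
  obtain ⟨B, hBm, hBsub, hBdisj, hBunion⟩ := MeasurableSet.exists_disjoint_iUnion_eq
    (f := fun z => {y | z ≠ j ∧ density Q j z y = maxDensity Q j y})
    fun z => (MeasurableSet.const _).inter
      (measurableSet_eq_fun (measurable_density Q j z) (measurable_maxDensity Q j))
  have hcover : ⋃ z, B z = Set.univ := by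
    refine hBunion.trans (Set.eq_univ_of_forall fun y => ?_)
    obtain ⟨k, hk⟩ := exists_ne j
    obtain ⟨z, hz, hmax⟩ := exists_mem_eq_sup (univ.erase j) ⟨k, mem_erase.mpr ⟨hk, mem_univ k⟩⟩
      (fun w => density Q j w y)
    exact Set.mem_iUnion.mpr ⟨z, ne_of_mem_erase hz, by rw [maxDensity, Finset.sup_apply, hmax]⟩
  refine ⟨B, hBm, hBdisj, ?_, fun z _ => ?_⟩
  · rw [← hcover]
    refine subset_antisymm (Set.iUnion₂_subset fun z _ => Set.subset_iUnion B z)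
      (Set.iUnion_subset fun z y hy => Set.mem_biUnion (hBsub z hy).1 hy)
  · rw [defaulterLaw, ← withDensity_density Q j z, withDensity_apply _ (hBm z),
      withDensity_apply _ (hBm z)]
    exact setLIntegral_congr_fun (hBm z) fun y hy => (hBsub z hy).2.symm

theorem sum_defaulterLaw_le_one [Nontrivial ι]
    (hpart : ∀ B : ι → ι → Set α, (∀ j z, MeasurableSet (B j z)) →
      (∀ j, ∀ z ≠ j, ∀ z' ≠ j, z ≠ z' → Disjoint (B j z) (B j z')) →
      (∀ j, ⋃ z ∈ ({j}ᶜ : Set ι), B j z = Set.univ) →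
      ∑ j, ∑ z ∈ univ.erase j, Q j z (B j z) ≤ 1) :
    ∑ j, defaulterLaw Q j Set.univ ≤ 1 := by
  choose B hBm hBdisj hBcover hBeq using exists_partition_defaulterLaw_eq Q
  have hsplit : ∀ j, defaulterLaw Q j Set.univ = ∑ z ∈ univ.erase j, Q j z (B j z) := by
    intro j
    have hunion : Set.univ = ⋃ z ∈ univ.erase j, B j z := by
      rw [← hBcover j]
      simp
    rw [hunion, measure_biUnion_finset (fun z _ z' _ h => hBdisj j h) fun z _ => hBm j z]
    exact sum_congr rfl fun z hz => hBeq j z (ne_of_mem_erase hz)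
  simp_rw [hsplit]
  exact hpart B hBm (fun j z _ z' _ h => hBdisj j h) hBcover

instance (j : ι) : IsFiniteMeasure (complierResidual Q j) :=
  isFiniteMeasure_withDensity <| ne_top_of_le_ne_top
    (Measure.lintegral_rnDeriv_lt_top (Q j j) (refMeasure Q j)).ne
    (lintegral_mono fun _ => tsub_le_self)

theorem defaulterLaw_le_refMeasure (j : ι) : defaulterLaw Q j ≤ refMeasure Q j := by
  calc defaulterLaw Q j ≤ (refMeasure Q j).withDensity (∑ w, density Q j w) := by
        refine withDensity_mono (ae_of_all _ fun y => ?_)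
        rw [maxDensity, Finset.sup_apply, Finset.sum_apply]
        exact Finset.sup_le fun w _ =>
          single_le_sum (f := fun w => density Q j w y) (fun _ _ => zero_le) (mem_univ w)
    _ = refMeasure Q j := by
        rw [← Measure.finsetSum_withDensity _ _ fun w _ => measurable_density Q j w]
        simp_rw [withDensity_density]
        rfl

instance (j : ι) : IsFiniteMeasure (defaulterLaw Q j) :=
  isFiniteMeasure_of_le _ (defaulterLaw_le_refMeasure Q j)

instance (j : ι) (S : Finset ι) : IsFiniteMeasure (typeLaw Q j S) :=
  isFiniteMeasure_of_le _ (typeLaw_le_defaulterLaw Q j S)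

theorem add_sum_typeLaw_mem {j z : ι} (hz : z ≠ j) :
    Q j z + ∑ S ∈ (univ.erase j).powerset with z ∈ S, typeLaw Q j S = defaulterLaw Q j := by
  rw [← sum_typeLaw, ← sum_filter_not_add_sum_filter (univ.erase j).powerset (z ∈ ·),
    powerset_filter_notMem, sum_typeLaw_powerset_erase Q hz]

-- The units that comply at `j` without defaulting to `j` carry exactly the residual mass.
theorem sum_typeLaw_mem_add_complierMass (hsum : ∀ z, ∑ j, Q j z Set.univ = 1)
    (hdom : ∀ j k, k ≠ j → Q j k ≤ Q j j) (hdef : ∑ j, defaulterLaw Q j Set.univ ≤ 1) (j : ι) :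
    ∑ j' ∈ univ.erase j, ∑ S ∈ (univ.erase j').powerset with j ∈ S, typeLaw Q j' S Set.univ
      + complierMass Q = complierResidual Q j Set.univ := by
  set X := ∑ j' ∈ univ.erase j, ∑ S ∈ (univ.erase j').powerset with j ∈ S,
    typeLaw Q j' S Set.univ
  set Y := ∑ j' ∈ univ.erase j, Q j' j Set.univ + defaulterLaw Q j Set.univ
  have hdefaulter : ∀ j' ∈ univ.erase j, Q j' j Set.univ
      + ∑ S ∈ (univ.erase j').powerset with j ∈ S, typeLaw Q j' S Set.univ
      = defaulterLaw Q j' Set.univ := fun j' hj' => by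
    rw [← add_sum_typeLaw_mem Q (ne_of_mem_erase hj').symm, Measure.add_apply,
      Measure.finsetSum_apply]
  have h1 : X + complierMass Q + Y = 1 := by
    calc X + complierMass Q + Y
        = ∑ j' ∈ univ.erase j, (Q j' j Set.univ
            + ∑ S ∈ (univ.erase j').powerset with j ∈ S, typeLaw Q j' S Set.univ)
          + defaulterLaw Q j Set.univ + complierMass Q := by
          rw [sum_add_distrib]; ring
      _ = 1 := by
          rw [sum_congr rfl hdefaulter, sum_erase_add _ _ (mem_univ j), complierMass,
            add_tsub_cancel_of_le hdef]
  have h2 : complierResidual Q j Set.univ + Y = 1 := by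
    calc complierResidual Q j Set.univ + Y
        = ∑ j' ∈ univ.erase j, Q j' j Set.univ
          + (defaulterLaw Q j + complierResidual Q j) Set.univ := by
          rw [Measure.add_apply]; ring
      _ = 1 := by
          rw [defaulterLaw_add_complierResidual Q hdom, sum_erase_add _ _ (mem_univ j), hsum]
  have hY : Y ≠ ∞ := ne_top_of_le_ne_top ENNReal.one_ne_top (h2 ▸ le_add_self)
  exact (ENNReal.add_left_inj hY).mp (h1.trans h2.symm)

variable [Nonempty α]

noncomputable def complierLaw (j : ι) : Measure α :=
  (FiniteMeasure.normalize ⟨complierResidual Q j, inferInstance⟩ : Measure α)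

instance (j : ι) : IsProbabilityMeasure (complierLaw Q j) := by
  unfold complierLaw; infer_instance

theorem complierResidual_apply (j : ι) (B : Set α) :
    complierResidual Q j B = complierResidual Q j Set.univ * complierLaw Q j B := by
  let ρ : FiniteMeasure α := ⟨complierResidual Q j, inferInstance⟩
  have h := congrArg ((↑) : NNReal → ℝ≥0∞) (ρ.self_eq_mass_mul_normalize B)
  rwa [ENNReal.coe_mul, FiniteMeasure.ennreal_mass,
    FiniteMeasure.ennreal_coeFn_eq_coeFn_toMeasure,
    ProbabilityMeasure.ennreal_coeFn_eq_coeFn_toMeasure] at h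

-- Outcomes `y i` with `i ∉ insert j S` are never observed; drawing them from `complierLaw Q i`
-- only keeps the definition uniform.
noncomputable def outcomeLaw (j : ι) (S : Finset ι) : Measure (ι → α) :=
  Measure.pi (Function.update (complierLaw Q) j (typeLaw Q j S))

instance (j : ι) (S : Finset ι) : IsFiniteMeasure (outcomeLaw Q j S) := by
  unfold outcomeLaw; infer_instance

theorem outcomeLaw_eval_self (j : ι) (S : Finset ι) {B : Set α} (hB : MeasurableSet B) :
    outcomeLaw Q j S (Function.eval j ⁻¹' B) = typeLaw Q j S B := by
  rw [outcomeLaw, Measure.pi_update_eval_preimage _ _ _ _ hB, if_pos rfl]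

theorem outcomeLaw_eval_of_ne {i j : ι} (hij : i ≠ j) (S : Finset ι) {B : Set α}
    (hB : MeasurableSet B) :
    outcomeLaw Q j S (Function.eval i ⁻¹' B) = typeLaw Q j S Set.univ * complierLaw Q i B := by
  rw [outcomeLaw, Measure.pi_update_eval_preimage _ _ _ _ hB, if_neg hij]

variable [MeasurableSpace ι]

noncomputable def model : Measure ((ι → α) × (ι → ι)) :=
  ∑ j, ∑ S ∈ (univ.erase j).powerset, (outcomeLaw Q j S).prod (Measure.dirac (treatment j S))
    + complierMass Q • (Measure.pi (complierLaw Q)).prod (Measure.dirac id)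

variable [MeasurableSingletonClass ι]

theorem model_apply_prod (A : Set (ι → α)) (D : Set (ι → ι)) [DecidablePred (· ∈ D)] :
    model Q (A ×ˢ D)
      = ∑ j, ∑ S ∈ (univ.erase j).powerset,
          (if treatment j S ∈ D then outcomeLaw Q j S A else 0)
        + complierMass Q * if id ∈ D then Measure.pi (complierLaw Q) A else 0 := by
  simp only [model, Measure.add_apply, Measure.smul_apply, smul_eq_mul, Measure.finsetSum_apply,
    Measure.prod_dirac_apply_prod]

theorem isProbabilityMeasure_model (hdef : ∑ j, defaulterLaw Q j Set.univ ≤ 1) :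
    IsProbabilityMeasure (model Q) := by
  constructor
  have h : ∀ j S, outcomeLaw Q j S Set.univ = typeLaw Q j S Set.univ := fun j S => by
    simpa using outcomeLaw_eval_self Q j S MeasurableSet.univ
  rw [← Set.univ_prod_univ, model_apply_prod]
  have h' : ∀ j, ∑ S ∈ (univ.erase j).powerset, typeLaw Q j S Set.univ
      = defaulterLaw Q j Set.univ := fun j => by
    rw [← sum_typeLaw Q j, Measure.finsetSum_apply]
  simp only [Set.mem_univ, if_true, measure_univ, mul_one, h, h']
  exact add_tsub_cancel_of_le hdef

theorem model_apply_eval_prod_of_ne {j z : ι} (hz : z ≠ j) {B : Set α} (hB : MeasurableSet B) :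
    model Q ((Function.eval j ⁻¹' B) ×ˢ {d | d z = j}) = Q j z B := by
  rw [model_apply_prod]
  simp only [Set.mem_ofPred_eq, id, if_neg hz, mul_zero, add_zero, treatment_eq_iff_of_ne hz]
  rw [sum_eq_single j (fun j' _ hj' => sum_eq_zero fun S _ => if_neg fun h => hj' h.1)
    (fun h => (h (mem_univ j)).elim)]
  simp only [true_and]
  rw [← sum_filter, powerset_filter_notMem, ← sum_typeLaw_powerset_erase Q hz,
    Measure.finsetSum_apply]
  exact sum_congr rfl fun S _ => outcomeLaw_eval_self Q j S hB

theorem model_apply_eval_prod_self (hsum : ∀ z, ∑ j, Q j z Set.univ = 1)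
    (hdom : ∀ j k, k ≠ j → Q j k ≤ Q j j) (hdef : ∑ j, defaulterLaw Q j Set.univ ≤ 1)
    (j : ι) {B : Set α} (hB : MeasurableSet B) :
    model Q ((Function.eval j ⁻¹' B) ×ˢ {d | d j = j}) = Q j j B := by
  have hcompliers : ∀ j' ∈ univ.erase j, ∑ S ∈ (univ.erase j').powerset,
      (if treatment j' S j = j then outcomeLaw Q j' S (Function.eval j ⁻¹' B) else 0)
      = (∑ S ∈ (univ.erase j').powerset with j ∈ S, typeLaw Q j' S Set.univ)
        * complierLaw Q j B := fun j' hj' => by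
    simp only [treatment_eq_self_iff_of_ne (ne_of_mem_erase hj'), ← sum_filter, sum_mul]
    exact sum_congr rfl fun S _ => outcomeLaw_eval_of_ne Q (ne_of_mem_erase hj').symm S hB
  rw [model_apply_prod]
  simp only [Set.mem_ofPred_eq, id, if_true]
  rw [← add_sum_erase _ _ (mem_univ j), sum_congr rfl hcompliers,
    (measurePreserving_eval (complierLaw Q) j).measure_preimage hB.nullMeasurableSet]
  simp only [treatment_self, if_true]
  calc ∑ S ∈ (univ.erase j).powerset, outcomeLaw Q j S (Function.eval j ⁻¹' B)
        + ∑ j' ∈ univ.erase j, (∑ S ∈ (univ.erase j').powerset with j ∈ S,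
            typeLaw Q j' S Set.univ) * complierLaw Q j B
        + complierMass Q * complierLaw Q j B
      = defaulterLaw Q j B + (∑ j' ∈ univ.erase j, ∑ S ∈ (univ.erase j').powerset with j ∈ S,
            typeLaw Q j' S Set.univ + complierMass Q) * complierLaw Q j B := by
        rw [← sum_typeLaw, Measure.finsetSum_apply,
          sum_congr rfl fun S _ => outcomeLaw_eval_self Q j S hB, add_mul, sum_mul, add_assoc]
    _ = Q j j B := by
        rw [sum_typeLaw_mem_add_complierMass Q hsum hdom hdef, ← complierResidual_apply,
          ← Measure.add_apply, defaulterLaw_add_complierResidual Q hdom]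

theorem ae_hasDefaultChoice_model [Nonempty ι] : ∀ᵐ yd ∂model Q, HasDefaultChoice yd.2 := by
  classical
  have hid : HasDefaultChoice (id : ι → ι) := ⟨Classical.arbitrary ι, fun _ => Or.inl rfl⟩
  have hbad : {yd : (ι → α) × (ι → ι) | ¬HasDefaultChoice yd.2}
      = Set.univ ×ˢ {d | ¬HasDefaultChoice d} := by
    ext; simp
  rw [ae_iff, hbad, model_apply_prod]
  simp [hasDefaultChoice_treatment, hid]

theorem model_apply_eval_prod (hsum : ∀ z, ∑ j, Q j z Set.univ = 1)
    (hdom : ∀ j k, k ≠ j → Q j k ≤ Q j j) (hdef : ∑ j, defaulterLaw Q j Set.univ ≤ 1)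
    (j z : ι) {B : Set α} (hB : MeasurableSet B) :
    model Q ((Function.eval j ⁻¹' B) ×ˢ {d | d z = j}) = Q j z B := by
  rcases eq_or_ne z j with rfl | hz
  · exact model_apply_eval_prod_self Q hsum hdom hdef z hB
  · exact model_apply_eval_prod_of_ne Q hz hB

end Model

section Observation

variable {α ι : Type*} [MeasurableSpace α] [MeasurableSpace ι]

noncomputable def condLaw (P : Measure (α × ι × ι)) (j z : ι) : Measure α :=
  (P {x | x.2.2 = z})⁻¹ • (P.restrict {x | x.2.1 = j ∧ x.2.2 = z}).map Prod.fst

theorem condLaw_apply (P : Measure (α × ι × ι)) (j z : ι) {B : Set α} (hB : MeasurableSet B) :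
    condLaw P j z B = P {x | x.1 ∈ B ∧ x.2.1 = j ∧ x.2.2 = z} / P {x | x.2.2 = z} := by
  rw [condLaw, Measure.smul_apply, smul_eq_mul, Measure.map_apply measurable_fst hB,
    Measure.restrict_apply (measurable_fst hB), div_eq_mul_inv, mul_comm]
  rfl

instance (P : Measure (α × ι × ι)) (j z : ι) : IsFiniteMeasure (condLaw P j z) := by
  constructor
  rw [condLaw_apply P j z MeasurableSet.univ]
  refine (ENNReal.div_le_of_le_mul ?_).trans_lt ENNReal.one_lt_top
  rw [one_mul]
  exact measure_mono fun x hx => hx.2.2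

theorem sum_condLaw_univ [Fintype ι] [MeasurableSingletonClass ι] (P : Measure (α × ι × ι))
    {z : ι} (hz : P {x | x.2.2 = z} ≠ 0) (hz' : P {x | x.2.2 = z} ≠ ∞) :
    ∑ j, condLaw P j z Set.univ = 1 := by
  simp only [condLaw_apply P _ z MeasurableSet.univ, div_eq_mul_inv, ← sum_mul]
  convert ENNReal.mul_inv_cancel hz hz'
  have h := sum_measure_preimage_singleton (μ := P.restrict {x | x.2.2 = z}) univ
    (f := fun x : α × ι × ι => x.2.1) fun j _ => measurable_snd.fst (measurableSet_singleton j)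
  rw [coe_univ, Set.preimage_univ, Measure.restrict_apply_univ] at h
  rw [← h]
  refine sum_congr rfl fun j _ => ?_
  rw [Measure.restrict_apply (measurable_snd.fst (measurableSet_singleton j))]
  congr 1
  ext x
  simp

theorem condLaw_apply_mul (P : Measure (α × ι × ι)) (j z : ι) {B : Set α} (hB : MeasurableSet B)
    (hz : P {x | x.2.2 = z} ≠ 0) (hz' : P {x | x.2.2 = z} ≠ ∞) :
    condLaw P j z B * P {x | x.2.2 = z} = P (B ×ˢ {(j, z)}) := by
  rw [condLaw_apply P j z hB, ENNReal.div_mul_cancel hz hz']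
  congr 1
  ext x
  simp [Prod.ext_iff]

def observe (x : ((ι → α) × (ι → ι)) × ι) : α × ι × ι := (x.1.1 (x.1.2 x.2), x.1.2 x.2, x.2)

theorem measurable_observe [Countable ι] [MeasurableSingletonClass ι] :
    Measurable (observe (α := α) (ι := ι)) := by
  have htreat : Measurable fun x : ((ι → α) × (ι → ι)) × ι => x.1.2 x.2 :=
    (measurable_from_prod_countable_left (f := fun p : (ι → ι) × ι => p.1 p.2)
      fun z => measurable_pi_apply z).comp
      (measurable_fst.snd.prodMk measurable_snd)
  have houtcome : Measurable fun x : ((ι → α) × (ι → ι)) × ι => x.1.1 (x.1.2 x.2) :=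
    (measurable_from_prod_countable_left (f := fun p : (ι → α) × ι => p.1 p.2)
      fun i => measurable_pi_apply i).comp
      (measurable_fst.fst.prodMk htreat)
  exact houtcome.prodMk (htreat.prodMk measurable_snd)

theorem map_observe_prod_apply [Countable ι] [MeasurableSingletonClass ι]
    (μ : Measure ((ι → α) × (ι → ι))) (ν : Measure ι) [SFinite ν] {B : Set α}
    (hB : MeasurableSet B) (j z : ι) :
    (μ.prod ν).map observe (B ×ˢ {(j, z)})
      = μ ((Function.eval j ⁻¹' B) ×ˢ {d | d z = j}) * ν {z} := by
  rw [Measure.map_apply measurable_observe (hB.prod (measurableSet_singleton _)),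
    ← Measure.prod_prod]
  congr 1
  ext ⟨⟨y, d⟩, w⟩
  simp only [observe, Set.mem_preimage, Set.mem_prod, Set.mem_singleton_iff, Prod.mk.injEq,
    Function.eval, Set.mem_ofPred_eq]
  constructor
  · rintro ⟨hB, hd, rfl⟩
    exact ⟨⟨hd ▸ hB, hd⟩, rfl⟩
  · rintro ⟨⟨hB, hd⟩, rfl⟩
    exact ⟨hd ▸ hB, hd, rfl⟩

end Observation

end DefaultChoice

open DefaultChoice

/-- sufficiency direction of Theorem 3 of the paper (case J₀ = 0): any
observed-data distribution `P` of `(Y, D, Z)` satisfying the testable inequalities is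
generated by a distribution of potential outcomes and potential treatments satisfying
the default-choice restriction, with the instrument exogenous. -/
theorem stmt_12 (J : ℕ) (hJ : 2 ≤ J)
    (P : Measure (ℝ × Fin J × Fin J)) [IsProbabilityMeasure P]
    (hpos : ∀ z : Fin J, 0 < P {x | x.2.2 = z})
    (hineqA : ∀ B : Fin J → Fin J → Set ℝ,
      (∀ j z, MeasurableSet (B j z)) →
      (∀ j : Fin J, ∀ z ≠ j, ∀ z' ≠ j, z ≠ z' → Disjoint (B j z) (B j z')) →
      (∀ j : Fin J, (⋃ z ∈ ({j}ᶜ : Set (Fin J)), B j z) = Set.univ) →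
      ∑ j : Fin J, ∑ z ∈ Finset.univ.erase j,
        P {x : ℝ × Fin J × Fin J | x.1 ∈ B j z ∧ x.2.1 = j ∧ x.2.2 = z}
          / P {x : ℝ × Fin J × Fin J | x.2.2 = z} ≤ 1)
    (hineqB : ∀ B : Set ℝ, MeasurableSet B → ∀ j k : Fin J, k ≠ j →
      P {x : ℝ × Fin J × Fin J | x.1 ∈ B ∧ x.2.1 = j ∧ x.2.2 = k}
          / P {x : ℝ × Fin J × Fin J | x.2.2 = k}
        ≤ P {x : ℝ × Fin J × Fin J | x.1 ∈ B ∧ x.2.1 = j ∧ x.2.2 = j}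
          / P {x : ℝ × Fin J × Fin J | x.2.2 = j}) :
    ∃ μ : Measure ((Fin J → ℝ) × (Fin J → Fin J)),
      IsProbabilityMeasure μ ∧
      (∀ᵐ yd ∂μ, ∃ jstar : Fin J, ∀ j, yd.2 j = j ∨ yd.2 j = jstar) ∧
      Measure.map
        (fun x : ((Fin J → ℝ) × (Fin J → Fin J)) × Fin J =>
          (x.1.1 (x.1.2 x.2), x.1.2 x.2, x.2))
        (μ.prod (P.map (fun x => x.2.2))) = P := by
  have : Nontrivial (Fin J) := Fin.nontrivial_iff_two_le.mpr hJ
  have hsum z := sum_condLaw_univ P (hpos z).ne' (measure_ne_top P _)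
  have hdom j k (hkj : k ≠ j) : condLaw P j k ≤ condLaw P j j := Measure.le_iff.mpr fun B hB => by
    simpa only [condLaw_apply P _ _ hB] using hineqB B hB j k hkj
  have hdef := sum_defaulterLaw_le_one (condLaw P) fun B hB hdisj hcover => by
    simpa only [condLaw_apply P _ _ (hB _ _)] using hineqA B hB hdisj hcover
  refine ⟨model (condLaw P), isProbabilityMeasure_model _ hdef,
    ae_hasDefaultChoice_model _, ?_⟩
  change Measure.map observe _ = P
  refine (Measure.ext_of_prod_singleton fun B hB ⟨j, z⟩ => ?_).symm
  rw [map_observe_prod_apply _ _ hB, model_apply_eval_prod _ hsum hdom hdef j z hB,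
    Measure.map_apply measurable_snd.snd (measurableSet_singleton z)]
  exact (condLaw_apply_mul P j z hB (hpos z).ne' (measure_ne_top P _)).symm
end
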